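/- Let λ ∈ ℝ⁴ with λ_1 ≥ λ_2 ≥ λ_3 ≥ λ_4, λ ∈ Γ_3, and σ_3(λ) = σ_1(λ). Denote σ_k(λ|4) the elementary symmetric polynomials of (λ_1,λ_2,λ_3). Then σ_2(λ|4) ≥ 3. -/

import Mathlib

/-!
Newton's inequalities for four reals give `8 σ₂ ≤ 3 σ₁²` and `9 σ₁ σ₃ ≤ 4 σ₂²`. With `σ₃ = σ₁ > 0`
the second becomes `3 σ₁ ≤ 2 σ₂`, so `12 σ₁ ≤ 8 σ₂ ≤ 3 σ₁²`, whence `σ₁ ≥ 4` and `σ₂ ≥ 6`.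
Splitting off the smallest entry, `σ₂(λ) = σ₂(λ|4) + λ₄ σ₁(λ|4)` with `λ₄ σ₁(λ|4) ≤ σ₂(λ|4)`,
so `σ₂(λ|4) ≥ σ₂(λ) / 2 ≥ 3`.
-/

open Real Finset

/-- The `k`-th elementary symmetric polynomial of `x : Fin n → ℝ`. -/
def esymm (n k : ℕ) (x : Fin n → ℝ) : ℝ :=
  ∑ s ∈ (Finset.univ : Finset (Fin n)).powersetCard k, ∏ i ∈ s, x i

theorem esymm_zero_right (n : ℕ) (x : Fin n → ℝ) : esymm n 0 x = 1 := by
  simp [esymm]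

theorem esymm_zero_succ (k : ℕ) (x : Fin 0 → ℝ) : esymm 0 (k + 1) x = 0 := by
  rw [esymm, powersetCard_eq_empty.2 (by simp), sum_empty]

theorem esymm_succ_succ (n k : ℕ) (x : Fin (n + 1) → ℝ) :
    esymm (n + 1) (k + 1) x =
      esymm n (k + 1) (fun i => x i.castSucc) + x (Fin.last n) * esymm n k (fun i => x i.castSucc) := by
  simp only [esymm, ← Finset.esymm_map_val, Multiset.esymm, Fin.univ_castSuccEmb, cons_val,
    Multiset.map_cons, Multiset.powersetCard_cons, Multiset.map_add, Multiset.map_map]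
  simp [Function.comp_def, Multiset.sum_map_mul_left]

theorem esymm_three_one (x : Fin 3 → ℝ) : esymm 3 1 x = x 0 + x 1 + x 2 := by
  simp [esymm_succ_succ, esymm_zero_right, esymm_zero_succ]

theorem esymm_three_two (x : Fin 3 → ℝ) : esymm 3 2 x = x 0 * x 1 + x 0 * x 2 + x 1 * x 2 := by
  simp [esymm_succ_succ, esymm_zero_right, esymm_zero_succ]
  ring

theorem esymm_four_one (x : Fin 4 → ℝ) : esymm 4 1 x = x 0 + x 1 + x 2 + x 3 := by
  simp [esymm_succ_succ, esymm_zero_right, esymm_zero_succ]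

theorem esymm_four_two (x : Fin 4 → ℝ) : esymm 4 2 x =
    x 0 * x 1 + x 0 * x 2 + x 0 * x 3 + x 1 * x 2 + x 1 * x 3 + x 2 * x 3 := by
  simp [esymm_succ_succ, esymm_zero_right, esymm_zero_succ]
  ring

theorem esymm_four_three (x : Fin 4 → ℝ) : esymm 4 3 x =
    x 0 * x 1 * x 2 + x 0 * x 1 * x 3 + x 0 * x 2 * x 3 + x 1 * x 2 * x 3 := by
  simp [esymm_succ_succ, esymm_zero_right, esymm_zero_succ]
  ring

theorem newton_ineq_esymm_four_one (x : Fin 4 → ℝ) : 8 * esymm 4 2 x ≤ 3 * esymm 4 1 x ^ 2 := by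
  rw [esymm_four_one, esymm_four_two]
  nlinarith [sq_nonneg (x 0 - x 1), sq_nonneg (x 0 - x 2), sq_nonneg (x 0 - x 3),
    sq_nonneg (x 1 - x 2), sq_nonneg (x 1 - x 3), sq_nonneg (x 2 - x 3)]

theorem newton_ineq_esymm_four_two (x : Fin 4 → ℝ) :
    9 * esymm 4 1 x * esymm 4 3 x ≤ 4 * esymm 4 2 x ^ 2 := by
  rw [esymm_four_one, esymm_four_two, esymm_four_three]
  set a := x 0; set b := x 1; set c := x 2; set d := x 3
  nlinarith [sq_nonneg (a*b-c*d), sq_nonneg (a*c-b*d), sq_nonneg (a*d-b*c),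
      sq_nonneg (a*b+c*d-a*c-b*d), sq_nonneg (a*b+c*d-a*d-b*c),
      sq_nonneg (a*c+b*d-a*d-b*c), sq_nonneg (a-b), sq_nonneg (c-d),
      sq_nonneg (a*b - a*c - a*d + c*d), sq_nonneg (a*b - b*c - b*d + c*d)]

theorem six_le_esymm_four_two {x : Fin 4 → ℝ} (h1 : 0 < esymm 4 1 x) (h2 : 0 < esymm 4 2 x)
    (heq : esymm 4 3 x = esymm 4 1 x) : 6 ≤ esymm 4 2 x := by
  have hN₁ := newton_ineq_esymm_four_one x
  have hN₂ := newton_ineq_esymm_four_two x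
  rw [heq] at hN₂
  have h12 : 3 * esymm 4 1 x ≤ 2 * esymm 4 2 x := by nlinarith
  have h1_ge : 4 ≤ esymm 4 1 x := by nlinarith
  linarith

theorem last_mul_esymm_one_le_esymm_two {x : Fin 4 → ℝ} (hmin : ∀ i, x 3 ≤ x i)
    (h1 : 0 < esymm 4 1 x) (h2 : 0 < esymm 4 2 x) :
    x 3 * esymm 3 1 (fun i => x i.castSucc) ≤ esymm 3 2 (fun i => x i.castSucc) := by
  rcases le_or_gt 0 (x 3) with hnonneg | hneg
  · rw [esymm_three_one, esymm_three_two]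
    show x 3 * (x 0 + x 1 + x 2) ≤ x 0 * x 1 + x 0 * x 2 + x 1 * x 2
    nlinarith [mul_le_mul_of_nonneg_left (hmin 1) (hnonneg.trans (hmin 0)),
      mul_le_mul_of_nonneg_left (hmin 2) (hnonneg.trans (hmin 1)),
      mul_le_mul_of_nonneg_left (hmin 0) (hnonneg.trans (hmin 2))]
  · have hσ₁ : esymm 4 1 x = esymm 3 1 (fun i => x i.castSucc) + x 3 * esymm 3 0 _ :=
      esymm_succ_succ 3 0 x
    have hσ₂ : esymm 4 2 x = esymm 3 2 (fun i => x i.castSucc) + x 3 * esymm 3 1 _ :=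
      esymm_succ_succ 3 1 x
    rw [esymm_zero_right] at hσ₁
    have hσ₁_pos : 0 < esymm 3 1 (fun i => x i.castSucc) := by linarith
    nlinarith [mul_neg_of_neg_of_pos hneg hσ₁_pos]

theorem stmt_11 (lam : Fin 4 → ℝ)
    (hord : ∀ i j : Fin 4, i ≤ j → lam j ≤ lam i)
    (h1 : 0 < esymm 4 1 lam) (h2 : 0 < esymm 4 2 lam)
    (heq : esymm 4 3 lam = esymm 4 1 lam) :
    3 ≤ esymm 3 2 (fun i : Fin 3 => lam i.castSucc) := by
  have hσ₂ : 6 ≤ esymm 4 2 lam := six_le_esymm_four_two h1 h2 heq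
  have hmin := last_mul_esymm_one_le_esymm_two (fun i => hord i 3 (Fin.le_last i)) h1 h2
  have hsplit : esymm 4 2 lam = esymm 3 2 (fun i : Fin 3 => lam i.castSucc)
      + lam 3 * esymm 3 1 (fun i : Fin 3 => lam i.castSucc) := esymm_succ_succ 3 1 lam
  linarith
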